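/- arXiv:1706.07067 — 3 statements merged into one kernel-verified Lean document; each statement's English description precedes it below -/
import Mathlib

section
/- Strong monotonicity of the barrier on the second-order cone: let y, y', d, d' lie in the interior of K_soc ⊂ ℝ^{1+m} with y ∘ d = μe and y' ∘ d' = μe for some μ > 0 (where e = (1,0)). Then −⟨d − d', y − y'⟩_J ≥ ((det d + det d')/μ) · (‖ȳ − ȳ'‖² − (y_0 − y_0')²), where ⟨a, b⟩_J = 2 aᵀb is the Jordan-algebra inner product and det w = w_0² − ‖w̄‖². -/
open scoped RealInnerProductSpace

/-- The Jordan algebra `E_{1+m}` of quadratic forms: pairs `(x₀, x̄)`. -/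
abbrev E (m : ℕ) : Type := ℝ × EuclideanSpace ℝ (Fin m)

/-- The Jordan product `x ∘ y = (xᵀy, x₀ ȳ + y₀ x̄)`. -/
noncomputable def jmul {m : ℕ} (x y : E m) : E m :=
  (x.1 * y.1 + ⟪x.2, y.2⟫, x.1 • y.2 + y.1 • x.2)

/-- The standard Euclidean inner product on `ℝ^{1+m}`. -/
noncomputable def jip {m : ℕ} (x y : E m) : ℝ := x.1 * y.1 + ⟪x.2, y.2⟫

/-- The determinant `det x = x₀² - ‖x̄‖²`. -/
noncomputable def socDet {m : ℕ} (x : E m) : ℝ := x.1 ^ 2 - ‖x.2‖ ^ 2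

/-- The diagonal mirroring operator `R = diag(1, -I)`. -/
def Rop {m : ℕ} (x : E m) : E m := (x.1, -x.2)

/-- The unit element `e = (1, 0)`. -/
noncomputable def socUnit (m : ℕ) : E m := (1, 0)

/-- The second-order cone `K_soc = { x : x₀ ≥ ‖x̄‖ }`. -/
def Ksoc (m : ℕ) : Set (E m) := {x | ‖x.2‖ ≤ x.1}

/-! Complementarity `y ∘ d = μ e` forces `d = (μ / det y) R y`, hence `det d = μ² / det y`.
With `a = det y`, `b = det y'`, expanding `det (y - y') = a - 2 ⟨R y, y'⟩ + b` makes the cross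
term `⟨R y, y'⟩` cancel, and the two sides of the inequality differ by exactly
`μ (a - b)² / (a b) ≥ 0`. -/

section

variable {m : ℕ}

lemma jip_comm (x y : E m) : jip x y = jip y x := by
  simp only [jip, real_inner_comm]; ring

lemma jip_sub_left (x x' y : E m) : jip (x - x') y = jip x y - jip x' y := by
  simp only [jip, Prod.fst_sub, Prod.snd_sub, inner_sub_left]; ring

lemma jip_sub_right (x y y' : E m) : jip x (y - y') = jip x y - jip x y' := by
  rw [jip_comm, jip_sub_left, jip_comm y, jip_comm y']

lemma jip_smul_left (c : ℝ) (x y : E m) : jip (c • x) y = c * jip x y := by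
  simp only [jip, Prod.smul_fst, Prod.smul_snd, smul_eq_mul, real_inner_smul_left]; ring

lemma jip_Rop_self (x : E m) : jip (Rop x) x = socDet x := by
  simp only [jip, Rop, socDet, inner_neg_left, real_inner_self_eq_norm_sq]; ring

lemma jip_Rop_comm (x y : E m) : jip (Rop x) y = jip (Rop y) x := by
  simp only [jip, Rop, inner_neg_left, real_inner_comm]; ring

lemma socDet_smul (c : ℝ) (x : E m) : socDet (c • x) = c ^ 2 * socDet x := by
  simp only [socDet, Prod.smul_fst, Prod.smul_snd, smul_eq_mul, norm_smul, Real.norm_eq_abs,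
    mul_pow, sq_abs]; ring

lemma socDet_Rop (x : E m) : socDet (Rop x) = socDet x := by
  simp only [socDet, Rop, norm_neg]

lemma socDet_sub (x y : E m) :
    socDet (x - y) = socDet x - 2 * jip (Rop x) y + socDet y := by
  simp only [socDet, jip, Rop, Prod.fst_sub, Prod.snd_sub, inner_neg_left, norm_sub_sq_real]
  ring

lemma socDet_pos_of_norm_lt {x : E m} (hx : ‖x.2‖ < x.1) : 0 < socDet x := by
  have := norm_nonneg x.2
  simp only [socDet]; nlinarith

lemma eq_smul_Rop_of_jmul_eq {y d : E m} {μ : ℝ} (hy₀ : y.1 ≠ 0) (hy : socDet y ≠ 0)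
    (h : jmul y d = μ • socUnit m) : d = (μ / socDet y) • Rop y := by
  have h₁ : y.1 * d.1 + ⟪y.2, d.2⟫ = μ := by
    simpa [jmul, socUnit, mul_comm] using congrArg Prod.fst h
  have h₂ : y.1 • d.2 + d.1 • y.2 = 0 := by
    simpa [jmul, socUnit] using congrArg Prod.snd h
  -- pairing `h₂` with `ȳ` and subtracting from `y₀ • h₁` eliminates `⟪ȳ, d̄⟫`
  have h₃ : d.1 * socDet y = μ * y.1 := by
    have h₂y := congrArg (⟪y.2, ·⟫) h₂
    simp only [inner_add_right, real_inner_smul_right, inner_zero_right,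
      real_inner_self_eq_norm_sq] at h₂y
    simp only [socDet]
    linear_combination y.1 * h₁ - h₂y
  have hd₁ : d.1 = μ / socDet y * y.1 := by
    field_simp
    linear_combination h₃
  refine Prod.ext hd₁ (smul_right_injective _ hy₀ ?_)
  simp only [Rop, Prod.smul_snd]
  rw [eq_neg_of_add_eq_zero_left h₂, hd₁]
  module

lemma neg_two_jip_smul_Rop_sub_smul_Rop (y y' : E m) (μ : ℝ) (hy : socDet y ≠ 0)
    (hy' : socDet y' ≠ 0) :
    -(2 * jip ((μ / socDet y) • Rop y - (μ / socDet y') • Rop y') (y - y')) =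
      (μ / socDet y + μ / socDet y') * -socDet (y - y') +
        μ * (socDet y - socDet y') ^ 2 / (socDet y * socDet y') := by
  rw [jip_sub_left, jip_smul_left, jip_smul_left, jip_sub_right, jip_sub_right, jip_Rop_self,
    jip_Rop_self, jip_Rop_comm y', socDet_sub]
  field_simp
  ring

end

theorem soc_barrier_strong_monotonicity_general {m : ℕ} (y y' d d' : E m) (μ : ℝ) (hμ : 0 < μ)
    (hy : ‖y.2‖ < y.1) (hy' : ‖y'.2‖ < y'.1)
    (hyd : jmul y d = μ • socUnit m) (hyd' : jmul y' d' = μ • socUnit m) :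
    ((socDet d + socDet d') / μ) * (‖y.2 - y'.2‖ ^ 2 - (y.1 - y'.1) ^ 2)
      ≤ -(2 * jip (d - d') (y - y')) := by
  have ha := socDet_pos_of_norm_lt hy
  have hb := socDet_pos_of_norm_lt hy'
  obtain rfl := eq_smul_Rop_of_jmul_eq ((norm_nonneg _).trans_lt hy).ne' ha.ne' hyd
  obtain rfl := eq_smul_Rop_of_jmul_eq ((norm_nonneg _).trans_lt hy').ne' hb.ne' hyd'
  have hcoef : (socDet ((μ / socDet y) • Rop y) + socDet ((μ / socDet y') • Rop y')) / μ =
      μ / socDet y + μ / socDet y' := by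
    rw [socDet_smul, socDet_smul, socDet_Rop, socDet_Rop]
    field_simp
  have hfactor : ‖y.2 - y'.2‖ ^ 2 - (y.1 - y'.1) ^ 2 = -socDet (y - y') := by
    simp only [socDet, Prod.fst_sub, Prod.snd_sub]
    ring
  rw [hcoef, hfactor, neg_two_jip_smul_Rop_sub_smul_Rop y y' μ ha.ne' hb.ne',
    le_add_iff_nonneg_right]
  positivity

theorem soc_barrier_strong_monotonicity {m : ℕ} (y y' d d' : E m) (μ : ℝ) (hμ : 0 < μ)
    (hy : ‖y.2‖ < y.1) (hy' : ‖y'.2‖ < y'.1)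
    (hd : ‖d.2‖ < d.1) (hd' : ‖d'.2‖ < d'.1)
    (hyd : jmul y d = μ • socUnit m) (hyd' : jmul y' d' = μ • socUnit m) :
    ((socDet d + socDet d') / μ) * (‖y.2 - y'.2‖ ^ 2 - (y.1 - y'.1) ^ 2)
      ≤ -(2 * jip (d - d') (y - y')) :=
  soc_barrier_strong_monotonicity_general y y' d d' μ hμ hy hy' hyd hyd'
end

section
/- Let y, d be interior points of the second-order cone K_soc ⊂ ℝ^{1+m} with y ∘ d = μe and ⟨e, y⟩_J = 2y_0 = b_0 for some μ, b_0 > 0 (taking a = e). Then the determinant of d satisfies (2μ² + 2μ b_0‖d̄‖)/b_0² ≤ det d ≤ (4μ² + 2μ b_0‖d̄‖)/b_0², where d̄ ∈ ℝ^m is the vector part of d and det d = d_0² − ‖d̄‖². -/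
open scoped RealInnerProductSpace

set_option maxHeartbeats 1000000 in
theorem soc_det_estimate {m : ℕ} (y d : E m) (μ b₀ : ℝ) (hμ : 0 < μ) (hb : 0 < b₀)
    (hy : ‖y.2‖ < y.1) (hd : ‖d.2‖ < d.1)
    (hyd : jmul y d = μ • socUnit m) (hcon : 2 * y.1 = b₀) :
    (2 * μ ^ 2 + 2 * μ * b₀ * ‖d.2‖) / b₀ ^ 2 ≤ socDet d ∧
    socDet d ≤ (4 * μ ^ 2 + 2 * μ * b₀ * ‖d.2‖) / b₀ ^ 2 := by
  have hs : (0:ℝ) ≤ ‖d.2‖ := norm_nonneg _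
  have hd1 : 0 < d.1 := lt_of_le_of_lt hs hd
  have hy1 : 0 < y.1 := lt_of_le_of_lt (norm_nonneg _) hy
  have h1 : y.1 * d.1 + ⟪y.2, d.2⟫ = μ := by
    have := congrArg Prod.fst hyd
    simpa [jmul, socUnit] using this
  have h2 : y.1 • d.2 + d.1 • y.2 = 0 := by
    have := congrArg Prod.snd hyd
    simpa [jmul, socUnit] using this
  have h2' : y.1 * ‖d.2‖ ^ 2 + d.1 * ⟪y.2, d.2⟫ = 0 := by
    have h := congrArg (fun v : EuclideanSpace ℝ (Fin m) => ⟪v, d.2⟫) h2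
    simp only [inner_add_left, real_inner_smul_left, inner_zero_left] at h
    rw [real_inner_self_eq_norm_sq] at h
    linarith
  have hkey : y.1 * socDet d = μ * d.1 := by
    unfold socDet
    linear_combination d.1 * h1 - h2'
  set D := socDet d with hDdef
  set s := ‖d.2‖ with hsdef
  have hD : 0 < D := by
    have h' : s ^ 2 < d.1 ^ 2 := by nlinarith
    simp only [hDdef, socDet]
    nlinarith
  have hyb : y.1 = b₀ / 2 := by linarith
  have hkey' : b₀ * D = 2 * μ * d.1 := by
    rw [hyb] at hkey; linarith
  have hd1eq : D = d.1 ^ 2 - s ^ 2 := rfl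
  have heq : b₀ ^ 2 * D ^ 2 = 4 * μ ^ 2 * (D + s ^ 2) := by
    linear_combination (b₀ * D + 2 * μ * d.1) * hkey' - 4 * μ ^ 2 * hd1eq
  have heq2 : (b₀ ^ 2 * D) ^ 2 = 4 * μ ^ 2 * (b₀ ^ 2 * D) + 4 * μ ^ 2 * b₀ ^ 2 * s ^ 2 := by
    linear_combination b₀ ^ 2 * heq
  have hb2 : (0:ℝ) < b₀ ^ 2 := by positivity
  have htpos : 0 < b₀ ^ 2 * D := mul_pos hb2 hD
  have ht4 : 4 * μ ^ 2 ≤ b₀ ^ 2 * D := by nlinarith [heq2, htpos]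
  have hmbs : 0 ≤ μ * b₀ * s := mul_nonneg (mul_nonneg hμ.le hb.le) hs
  constructor
  · rw [div_le_iff₀ hb2]
    have hF2 : 0 < b₀ ^ 2 * D - 2 * μ ^ 2 + 2 * μ * b₀ * s := by nlinarith
    nlinarith [heq2, hF2, sq_nonneg μ]
  · rw [le_div_iff₀ hb2]
    have hF3 : 0 < b₀ ^ 2 * D + 2 * μ * b₀ * s := by linarith
    nlinarith [heq2, hF3, mul_nonneg hμ.le hmbs]
end

section
/- Let y, d be interior points of K_soc ⊂ ℝ^{1+m} with y ∘ d = μe, μ > 0, and 2y_0 = b_0 > 0. Then d_0 = (μ + √(μ² + b_0²‖d̄‖²))/b_0. -/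
open scoped RealInnerProductSpace

/-!
Writing the centrality condition `y ∘ d = μ e` componentwise, pairing `y₀ d̄ + d₀ ȳ = 0` with `d̄`
gives `d₀ ⟪ȳ, d̄⟫ = -y₀ ‖d̄‖²`, so `d₀ (y₀ d₀ + ⟪ȳ, d̄⟫) = μ d₀` becomes `μ d₀ = y₀ det d`.
With `2 y₀ = b₀` this is the quadratic `b₀ d₀² - 2 μ d₀ = b₀ ‖d̄‖²`, whose only positive root is the
stated one.
-/

theorem jmul_eq_smul_socUnit_iff {m : ℕ} {y d : E m} {μ : ℝ} :
    jmul y d = μ • socUnit m ↔ y.1 * d.1 + ⟪y.2, d.2⟫ = μ ∧ y.1 • d.2 + d.1 • y.2 = 0 := by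
  simp [jmul, socUnit, Prod.ext_iff]

theorem mul_fst_eq_fst_mul_socDet_of_jmul_eq_smul_socUnit {m : ℕ} {y d : E m} {μ : ℝ}
    (h : jmul y d = μ • socUnit m) : μ * d.1 = y.1 * socDet d := by
  obtain ⟨hfst, hsnd⟩ := jmul_eq_smul_socUnit_iff.mp h
  have hinner : d.1 * ⟪y.2, d.2⟫ = -(y.1 * ‖d.2‖ ^ 2) := by
    have := congrArg (⟪·, d.2⟫) hsnd
    simp only [inner_add_left, real_inner_smul_left, real_inner_self_eq_norm_sq,
      inner_zero_left] at this
    linarith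
  rw [socDet, ← hfst]
  linear_combination hinner

theorem eq_pos_root_of_mul_sq_sub_eq {a b r x : ℝ} (ha : 0 < a) (hx : 0 < x)
    (h : a * x ^ 2 - 2 * b * x = a * r ^ 2) :
    x = (b + Real.sqrt (b ^ 2 + a ^ 2 * r ^ 2)) / a := by
  have hsq : b ^ 2 + a ^ 2 * r ^ 2 = (a * x - b) ^ 2 := by linear_combination (-a) * h
  have hnonneg : 0 ≤ a * x - b := by
    nlinarith [mul_pos ha hx, sq_nonneg (a * r)]
  rw [hsq, Real.sqrt_sq hnonneg]
  field_simp
  ring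

theorem soc_d0_formula_general {m : ℕ} (y d : E m) (μ b₀ : ℝ) (hb : 0 < b₀)
    (hd : ‖d.2‖ < d.1)
    (hyd : jmul y d = μ • socUnit m) (hcon : 2 * y.1 = b₀) :
    d.1 = (μ + Real.sqrt (μ ^ 2 + b₀ ^ 2 * ‖d.2‖ ^ 2)) / b₀ := by
  have hd₀ : 0 < d.1 := (norm_nonneg _).trans_lt hd
  have hdet := mul_fst_eq_fst_mul_socDet_of_jmul_eq_smul_socUnit hyd
  refine eq_pos_root_of_mul_sq_sub_eq hb hd₀ ?_
  rw [socDet] at hdet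
  subst hcon
  linear_combination (-2) * hdet

theorem soc_d0_formula {m : ℕ} (y d : E m) (μ b₀ : ℝ) (hμ : 0 < μ) (hb : 0 < b₀)
    (hy : ‖y.2‖ < y.1) (hd : ‖d.2‖ < d.1)
    (hyd : jmul y d = μ • socUnit m) (hcon : 2 * y.1 = b₀) :
    d.1 = (μ + Real.sqrt (μ ^ 2 + b₀ ^ 2 * ‖d.2‖ ^ 2)) / b₀ :=
  soc_d0_formula_general y d μ b₀ hb hd hyd hcon
end
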